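/- arXiv:2307.07174 — 10 statements merged into one kernel-verified Lean document; each statement's English description precedes it below -/
import Mathlib

section
/- Every customer attraction game in which all agents have weight 1 (the strategy spaces and node values may be arbitrary) possesses a pure Nash equilibrium. -/
open Finset

/-- A customer attraction game: nodes `N` with integer values `≥ 1`, agents `A`
with integer weights `≥ 1`, and a nonempty finite strategy space (a finite set of
subsets of `N`) for each agent. -/
structure CAG (N A : Type*) [Fintype N] [Fintype A] where
  v : N → ℕ
  v_pos : ∀ j, 1 ≤ v j
  w : A → ℕ
  w_pos : ∀ i, 1 ≤ w i
  strat : A → Finset (Finset N)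
  strat_ne : ∀ i, (strat i).Nonempty

variable {N A : Type*} [Fintype N] [Fintype A] [DecidableEq N]

/-- The load `c(j,S)` of node `j`: total weight of agents attracting `j`. -/
def CAG.load (G : CAG N A) (S : A → Finset N) (j : N) : ℕ :=
  ∑ i : A, if j ∈ S i then G.w i else 0

/-- The utility `U_i(S) = ∑_{j ∈ S_i} v_j · w_i / c(j,S)`. -/
noncomputable def CAG.util (G : CAG N A) (S : A → Finset N) (i : A) : ℝ :=
  ∑ j ∈ S i, (G.v j : ℝ) * (G.w i : ℝ) / (G.load S j : ℝ)

/-- A strategy profile: each agent plays a strategy from her strategy space. -/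
def CAG.valid (G : CAG N A) (S : A → Finset N) : Prop :=
  ∀ i, S i ∈ G.strat i

/-- Pure Nash equilibrium. -/
def CAG.PNE [DecidableEq A] (G : CAG N A) (S : A → Finset N) : Prop :=
  G.valid S ∧ ∀ i, ∀ S' ∈ G.strat i, G.util (Function.update S i S') i ≤ G.util S i

/-- Social welfare. -/
noncomputable def CAG.sw (G : CAG N A) (S : A → Finset N) : ℝ :=
  ∑ i : A, G.util S i

/-- The harmonic number `H_c = ∑_{k=1}^{c} 1/k`. -/
noncomputable def harm (c : ℕ) : ℝ := ∑ k ∈ Finset.range c, (1 : ℝ) / (k + 1)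

/-- Rosenthal-type potential `Φ(S) = ∑_j v_j ∑_{k=1}^{c(j,S)} 1/k`. -/
noncomputable def CAG.pot (G : CAG N A) (S : A → Finset N) : ℝ :=
  ∑ j : N, (G.v j : ℝ) * harm (G.load S j)

/-! With unit weights the game is an exact potential game for `Φ = CAG.pot`: when agent `i`
joins node `j` the term `v_j · H_{c(j)}` grows by exactly `v_j / c(j)`, which is `i`'s share of
`j`. So `Φ(S)` is `i`'s utility plus a quantity that does not depend on `S_i`, and a profile
maximising `Φ` over the finite set of strategy profiles is a pure Nash equilibrium. -/

theorem harm_succ (n : ℕ) : harm (n + 1) = harm n + 1 / (n + 1 : ℝ) :=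
  sum_range_succ _ _

namespace CAG

variable [DecidableEq A]

def loadExcept (G : CAG N A) (S : A → Finset N) (i : A) (j : N) : ℕ :=
  ∑ k ∈ univ.erase i, if j ∈ S k then G.w k else 0

theorem load_eq_loadExcept_add (G : CAG N A) (S : A → Finset N) (i : A) (j : N) :
    G.load S j = G.loadExcept S i j + if j ∈ S i then G.w i else 0 :=
  (sum_erase_add _ _ (mem_univ i)).symm

theorem loadExcept_update (G : CAG N A) (S : A → Finset N) (i : A)
    (S' : Finset N) : G.loadExcept (Function.update S i S') i = G.loadExcept S i := by
  funext j
  refine sum_congr rfl fun k hk => ?_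
  rw [Function.update_of_ne (ne_of_mem_erase hk)]

theorem pot_eq_sum_harm_loadExcept_add_util (G : CAG N A) (S : A → Finset N) (i : A)
    (hwi : G.w i = 1) :
    G.pot S = (∑ j : N, (G.v j : ℝ) * harm (G.loadExcept S i j)) + G.util S i := by
  rw [pot, util, ← univ_inter (S i), ← sum_ite_mem, ← sum_add_distrib]
  refine sum_congr rfl fun j _ => ?_
  have hload := G.load_eq_loadExcept_add S i j
  split_ifs at hload ⊢
  · rw [hload, hwi, harm_succ]
    push_cast
    ring
  · rw [hload, add_zero, add_zero]

theorem util_update_sub_util_eq_pot_sub (G : CAG N A) (S : A → Finset N) (i : A) (S' : Finset N)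
    (hwi : G.w i = 1) :
    G.util (Function.update S i S') i - G.util S i
      = G.pot (Function.update S i S') - G.pot S := by
  rw [G.pot_eq_sum_harm_loadExcept_add_util _ i hwi,
    G.pot_eq_sum_harm_loadExcept_add_util S i hwi, loadExcept_update]
  ring

theorem exists_valid_forall_pot_le (G : CAG N A) :
    ∃ S, G.valid S ∧ ∀ T, G.valid T → G.pot T ≤ G.pot S := by
  have hvalid : ∀ S, S ∈ Fintype.piFinset G.strat ↔ G.valid S := fun _ => Fintype.mem_piFinset
  obtain ⟨S, hS, hmax⟩ :=
    exists_max_image _ G.pot (Fintype.piFinset_nonempty.mpr G.strat_ne)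
  exact ⟨S, (hvalid S).mp hS, fun T hT => hmax T ((hvalid T).mpr hT)⟩

theorem PNE_of_forall_pot_le {G : CAG N A} (hw : ∀ i, G.w i = 1) {S : A → Finset N}
    (hS : G.valid S) (hmax : ∀ T, G.valid T → G.pot T ≤ G.pot S) : G.PNE S := by
  refine ⟨hS, fun i S' hS' => ?_⟩
  have := hmax _ ((Function.forall_update_iff S fun k s => s ∈ G.strat k).mpr
    ⟨hS', fun k _ => hS k⟩)
  linarith [G.util_update_sub_util_eq_pot_sub S i S' (hw i)]

end CAG

theorem exists_PNE_unit_weights_general [DecidableEq A]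
    (G : CAG N A) (hw : ∀ i, G.w i = 1) :
    ∃ S : A → Finset N, G.PNE S :=
  let ⟨S, hS, hmax⟩ := G.exists_valid_forall_pot_le
  ⟨S, CAG.PNE_of_forall_pot_le hw hS hmax⟩

/-- Every customer attraction game in which all agents have weight 1
possesses a pure Nash equilibrium. -/
theorem exists_PNE_unit_weights [DecidableEq A] [Nonempty N] [Nonempty A]
    (G : CAG N A) (hw : ∀ i, G.w i = 1) :
    ∃ S : A → Finset N, G.PNE S :=
  exists_PNE_unit_weights_general G hw
end

section
/- For integers n > m ≥ 1, consider the customer attraction game with node set N = {q_1, …, q_n}, agent set A = {1, …, m}, all weights and values equal to 1, and common strategy space 𝒮 = {{q_1,…,q_m}, {q_{m+1}}, {q_{m+2}}, …, {q_n}} for every agent. Then: (i) the profile in which every agent selects {q_1,…,q_m} is a pure Nash equilibrium with social welfare m; (ii) the maximum social welfare over all strategy profiles equals min{n, 2m−1}. Consequently this instance has price of anarchy at least min{n/m, 2 − 1/m}. -/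
open Finset

variable {N A : Type*} [Fintype N] [Fintype A] [DecidableEq N]

/-- The "big" strategy `{q_1, …, q_m}`. -/
def bigS (n m : ℕ) : Finset (Fin n) := Finset.univ.filter (fun q => (q : ℕ) < m)

/-- The singleton strategies `{q_{m+1}}, …, {q_n}`. -/
def smallS (n m : ℕ) : Finset (Finset (Fin n)) :=
  (Finset.univ.filter (fun q : Fin n => m ≤ (q : ℕ))).image (fun q => {q})

/-- The common strategy space `𝒮 = {{q_1,…,q_m}, {q_{m+1}}, …, {q_n}}`. -/
def SS (n m : ℕ) : Finset (Finset (Fin n)) := insert (bigS n m) (smallS n m)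

/-- The lower-bound instance: `n` unit-value nodes, `m` unit-weight agents, and
common strategy space `SS n m`. -/
def G5 (n m : ℕ) : CAG (Fin n) (Fin m) where
  v _ := 1
  v_pos _ := le_refl 1
  w _ := 1
  w_pos _ := le_refl 1
  strat _ := SS n m
  strat_ne _ := ⟨bigS n m, Finset.mem_insert_self _ _⟩

/-!
All values and weights are `1`, so the welfare of a profile is the number of covered nodes.
When everybody plays `{q_1,…,q_m}`, each agent gets `m · (1/m) = 1`, and a deviation to a
singleton `{q}` yields an unshared node, again worth `1`: a PNE of welfare `m`. Conversely, once
one agent plays `{q_1,…,q_m}`, each of the other `m - 1` agents covers at most one further node,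
and without such an agent only `m` nodes are covered; so at most `min{n, 2m - 1}` nodes are
covered, which one agent on `{q_1,…,q_m}` and the others on distinct singletons achieve.
-/

namespace CAG

variable (G : CAG N A) (S : A → Finset N)

lemma load_eq_sum_filter (j : N) : G.load S j = ∑ i ∈ univ.filter (fun i => j ∈ S i), G.w i :=
  (sum_filter _ _).symm

lemma load_pos_iff (j : N) : 0 < G.load S j ↔ ∃ i, j ∈ S i := by
  simp [load_eq_sum_filter, sum_pos_iff, fun i => Nat.lt_of_lt_of_le Nat.zero_lt_one (G.w_pos i)]

/-- Each covered node's value is split exactly among the agents attracting it. -/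
theorem sw_eq_sum_biUnion : G.sw S = ∑ j ∈ univ.biUnion S, (G.v j : ℝ) := by
  simp only [sw, util]
  rw [sum_comm' (t' := univ.biUnion S) (s' := fun j => univ.filter (fun i => j ∈ S i))
    (fun i j => by simpa using fun h => ⟨i, h⟩)]
  refine sum_congr rfl fun j hj => ?_
  have hload : (G.load S j : ℝ) ≠ 0 := by
    have := (G.load_pos_iff S j).2 (by simpa using hj)
    positivity
  rw [← sum_div, ← mul_sum, ← Nat.cast_sum, ← load_eq_sum_filter, mul_div_assoc, div_self hload,
    mul_one]

end CAG

section Instance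

variable {n m : ℕ}

@[simp]
lemma mem_bigS {q : Fin n} : q ∈ bigS n m ↔ (q : ℕ) < m := by
  simp [bigS]

lemma card_bigS : (bigS n m).card = min n m :=
  Fin.card_filter_val_lt

lemma mem_SS {T : Finset (Fin n)} :
    T ∈ SS n m ↔ T = bigS n m ∨ ∃ q : Fin n, m ≤ (q : ℕ) ∧ T = {q} := by
  simp [SS, smallS, eq_comm]

lemma card_sdiff_bigS_le_one {T : Finset (Fin n)} (hT : T ∈ SS n m) :
    (T \ bigS n m).card ≤ 1 := by
  rcases mem_SS.1 hT with rfl | ⟨q, -, rfl⟩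
  · simp
  · exact (card_le_card sdiff_subset).trans (card_singleton q).le

lemma G5_sw (S : Fin m → Finset (Fin n)) : (G5 n m).sw S = (univ.biUnion S).card := by
  simp [CAG.sw_eq_sum_biUnion, G5]

lemma G5_util (S : Fin m → Finset (Fin n)) (i : Fin m) :
    (G5 n m).util S i = ∑ j ∈ S i, 1 / ((G5 n m).load S j : ℝ) := by
  simp [CAG.util, G5]

lemma G5_util_allBig (hmn : m ≤ n) (i : Fin m) : (G5 n m).util (fun _ => bigS n m) i = 1 := by
  have hload : ∀ j ∈ bigS n m, (G5 n m).load (fun _ => bigS n m) j = m := fun j hj => by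
    simp [CAG.load, G5, hj]
  have hm : (m : ℝ) ≠ 0 := by exact_mod_cast i.pos.ne'
  rw [G5_util, sum_congr rfl fun j hj => by rw [hload j hj], sum_const, card_bigS,
    min_eq_right hmn, nsmul_eq_mul, mul_one_div_cancel hm]

lemma G5_util_update_singleton {q : Fin n} (hq : m ≤ (q : ℕ)) (i : Fin m) :
    (G5 n m).util (Function.update (fun _ => bigS n m) i {q}) i = 1 := by
  have hload : (G5 n m).load (Function.update (fun _ => bigS n m) i {q}) q = 1 := by
    rw [CAG.load, sum_eq_single i]
    · simp [G5]
    · intro k _ hk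
      simp [Function.update_of_ne hk, hq, G5]
    · simp
  simp [G5_util, hload]

lemma G5_sw_allBig (hmn : m ≤ n) : (G5 n m).sw (fun _ => bigS n m) = m := by
  simp [CAG.sw, G5_util_allBig hmn]

lemma G5_allBig_isPNE (hmn : m ≤ n) : (G5 n m).PNE (fun _ => bigS n m) := by
  refine ⟨fun _ => mem_insert_self _ _, fun i T hT => ?_⟩
  rw [G5_util_allBig hmn]
  rcases mem_SS.1 hT with rfl | ⟨q, hq, rfl⟩
  · rw [Function.update_eq_self, G5_util_allBig hmn]
  · rw [G5_util_update_singleton hq]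

lemma card_biUnion_le_two_mul_sub_one {S : Fin m → Finset (Fin n)} (hS : ∀ i, S i ∈ SS n m) :
    (univ.biUnion S).card ≤ 2 * m - 1 := by
  by_cases hbig : ∃ i₀, S i₀ = bigS n m
  · obtain ⟨i₀, hi₀⟩ := hbig
    have hsub : univ.biUnion S ⊆ S i₀ ∪ (univ.erase i₀).biUnion (fun i => S i \ bigS n m) := by
      intro j hj
      obtain ⟨i, -, hji⟩ := mem_biUnion.1 hj
      by_cases hj₀ : j ∈ S i₀
      · exact mem_union_left _ hj₀
      · have hi : i ≠ i₀ := by rintro rfl; exact hj₀ hji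
        exact mem_union_right _ (mem_biUnion.2 ⟨i, mem_erase.2 ⟨hi, mem_univ i⟩,
          mem_sdiff.2 ⟨hji, hi₀ ▸ hj₀⟩⟩)
    calc (univ.biUnion S).card
        ≤ (S i₀).card + ((univ.erase i₀).biUnion (fun i => S i \ bigS n m)).card :=
          (card_le_card hsub).trans (card_union_le _ _)
      _ ≤ m + ∑ i ∈ univ.erase i₀, 1 := by
          gcongr
          · exact hi₀ ▸ card_bigS ▸ min_le_right n m
          · exact card_biUnion_le.trans (sum_le_sum fun i _ => card_sdiff_bigS_le_one (hS i))
      _ = 2 * m - 1 := by simp; omega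
  · simp only [not_exists] at hbig
    have hsingle : ∀ i, (S i).card ≤ 1 := fun i => by
      obtain ⟨q, -, hq⟩ := (mem_SS.1 (hS i)).resolve_left (hbig i)
      simp [hq]
    calc (univ.biUnion S).card ≤ ∑ _i : Fin m, 1 :=
          card_biUnion_le.trans (sum_le_sum fun i _ => hsingle i)
      _ ≤ 2 * m - 1 := by simp; omega

lemma card_biUnion_le_min {S : Fin m → Finset (Fin n)} (hS : ∀ i, S i ∈ SS n m) :
    (univ.biUnion S).card ≤ min n (2 * m - 1) :=
  le_min ((card_le_univ _).trans_eq (Fintype.card_fin n)) (card_biUnion_le_two_mul_sub_one hS)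

lemma G5_sw_le {S : Fin m → Finset (Fin n)} (hS : (G5 n m).valid S) :
    (G5 n m).sw S ≤ (min n (2 * m - 1) : ℕ) := by
  rw [G5_sw, Nat.cast_le]
  exact card_biUnion_le_min hS

/-- The node `m + i - 1 : Fin n` is the paper's `q_{m+i}`. -/
def spreadProfile (n m : ℕ) (i : Fin m) : Finset (Fin n) :=
  if h : 0 < (i : ℕ) ∧ m + i - 1 < n then {⟨m + i - 1, h.2⟩} else bigS n m

lemma spreadProfile_mem_SS (i : Fin m) : spreadProfile n m i ∈ SS n m := by
  unfold spreadProfile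
  split_ifs with h
  · exact mem_SS.2 (Or.inr ⟨_, by simp only; omega, rfl⟩)
  · exact mem_insert_self _ _

lemma filter_lt_min_subset_biUnion_spreadProfile :
    univ.filter (fun q : Fin n => (q : ℕ) < min n (2 * m - 1)) ⊆
      univ.biUnion (spreadProfile n m) := by
  intro q hq
  have hq : (q : ℕ) < 2 * m - 1 := lt_of_lt_of_le (mem_filter.1 hq).2 (min_le_right _ _)
  rw [mem_biUnion]
  by_cases hqm : (q : ℕ) < m
  · exact ⟨⟨0, by omega⟩, mem_univ _, by simp [spreadProfile, hqm]⟩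
  · refine ⟨⟨q - m + 1, by omega⟩, mem_univ _, ?_⟩
    rw [spreadProfile, dif_pos (by simp only; omega), mem_singleton]
    ext
    simp only
    omega

lemma G5_sw_spreadProfile : (G5 n m).sw (spreadProfile n m) = (min n (2 * m - 1) : ℕ) := by
  rw [G5_sw, Nat.cast_inj]
  refine le_antisymm (card_biUnion_le_min spreadProfile_mem_SS) ?_
  have hcover := card_le_card (filter_lt_min_subset_biUnion_spreadProfile (n := n) (m := m))
  rwa [Fin.card_filter_val_lt, min_eq_right (min_le_left _ _)] at hcover

end Instance

lemma cast_min_two_mul_sub_one_div {n m : ℕ} (hm : 1 ≤ m) :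
    ((min n (2 * m - 1) : ℕ) : ℝ) / m = min ((n : ℝ) / m) (2 - 1 / m) := by
  have hm' : (m : ℝ) ≠ 0 := by positivity
  rw [Nat.cast_min, ← min_div_div_right (Nat.cast_nonneg m), Nat.cast_sub (by omega)]
  push_cast
  field_simp

/-- In the instance `G5 n m` (with `n > m ≥ 1`): (i) the profile where
every agent selects `{q_1,…,q_m}` is a PNE with social welfare `m`; (ii) the maximum
social welfare over all profiles equals `min{n, 2m−1}`; consequently the price of
anarchy of this instance is at least `min{n/m, 2 − 1/m}`. -/
theorem lower_bound_instance (n m : ℕ) (hm : 1 ≤ m) (hnm : m < n) :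
    (G5 n m).PNE (fun _ => bigS n m) ∧
    (G5 n m).sw (fun _ => bigS n m) = (m : ℝ) ∧
    (∃ S, (G5 n m).valid S ∧ (G5 n m).sw S = (min n (2 * m - 1) : ℕ)) ∧
    (∀ S, (G5 n m).valid S → (G5 n m).sw S ≤ (min n (2 * m - 1) : ℕ)) ∧
    min ((n : ℝ) / (m : ℝ)) (2 - 1 / (m : ℝ)) ≤ ((min n (2 * m - 1) : ℕ) : ℝ) / (m : ℝ) := by
  exact ⟨G5_allBig_isPNE hnm.le, G5_sw_allBig hnm.le,
    ⟨spreadProfile n m, spreadProfile_mem_SS, G5_sw_spreadProfile⟩,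
    fun _ => G5_sw_le, (cast_min_two_mul_sub_one_div hm).ge⟩
end

section
/- Consider the customer attraction game with a single node q of value 1 and two agents with weights w_1 = 1 and w_2 = 2, each having strategy space {{q}, ∅}. Then this game is not an exact potential game: there is no function Φ from the set of strategy profiles ({∅,{q}} × {∅,{q}}) to ℝ such that for every profile (S_1,S_2), every unilateral deviation S'_1 of agent 1 satisfies U_1(S'_1,S_2) − U_1(S_1,S_2) = Φ(S'_1,S_2) − Φ(S_1,S_2) and every unilateral deviation S'_2 of agent 2 satisfies U_2(S_1,S'_2) − U_2(S_1,S_2) = Φ(S_1,S'_2) − Φ(S_1,S_2). -/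
open Finset

variable {N A : Type*} [Fintype N] [Fintype A] [DecidableEq N]

/-- The instance with a single node of value 1 and two agents of weights 1 and 2,
each of whom may attract the node or stay idle (strategy space `{∅, {q}}`, i.e. all
subsets of the node set). -/
def G6 : CAG Unit (Fin 2) where
  v _ := 1
  v_pos _ := le_refl 1
  w := ![1, 2]
  w_pos := by decide
  strat _ := Finset.univ
  strat_ne _ := Finset.univ_nonempty

/-- The game `G6` is not an exact potential game: no function `Φ` on
profiles tracks every agent's utility change under unilateral deviations. -/
theorem not_exact_potential_game :
    ¬ ∃ Φ : (Fin 2 → Finset Unit) → ℝ,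
      ∀ (S : Fin 2 → Finset Unit) (i : Fin 2) (S' : Finset Unit),
        G6.util (Function.update S i S') i - G6.util S i
          = Φ (Function.update S i S') - Φ S := by
  rintro ⟨Φ, h⟩
  set S00 : Fin 2 → Finset Unit := ![∅, ∅] with hS00
  set S10 : Fin 2 → Finset Unit := ![{()}, ∅] with hS10
  set S11 : Fin 2 → Finset Unit := ![{()}, {()}] with hS11
  set S01 : Fin 2 → Finset Unit := ![∅, {()}] with hS01
  have u1 : Function.update S00 0 ({()} : Finset Unit) = S10 := by
    funext i; fin_cases i <;> simp [Function.update, hS00, hS10]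
  have u2 : Function.update S10 1 ({()} : Finset Unit) = S11 := by
    funext i; fin_cases i <;> simp [Function.update, hS10, hS11]
  have u3 : Function.update S11 0 (∅ : Finset Unit) = S01 := by
    funext i; fin_cases i <;> simp [Function.update, hS11, hS01]
  have u4 : Function.update S01 1 (∅ : Finset Unit) = S00 := by
    funext i; fin_cases i <;> simp [Function.update, hS01, hS00]
  have h1 := h S00 0 {()}
  have h2 := h S10 1 {()}
  have h3 := h S11 0 ∅
  have h4 := h S01 1 ∅
  rw [u1] at h1; rw [u2] at h2; rw [u3] at h3; rw [u4] at h4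
  simp only [CAG.util, CAG.load, G6, hS00, hS10, hS11, hS01] at h1 h2 h3 h4
  norm_num [Fin.sum_univ_two, Matrix.cons_val_zero, Matrix.cons_val_one] at h1 h2 h3 h4
  linarith
end

section
/- Consider a customer attraction game with exactly two agents, with weights w_1 and w_2. For a profile S = (S_1,S_2), define h_j(S) = v_j (w_1 + w_2 − w_1 w_2/(w_1+w_2)) if j ∈ S_1 ∩ S_2; h_j(S) = v_j w_1 if j ∈ S_1 \ S_2; h_j(S) = v_j w_2 if j ∈ S_2 \ S_1; and h_j(S) = 0 otherwise; and set H(S) = ∑_{j∈N} h_j(S). Then H is a weighted potential: for each agent i ∈ {1,2} and every unilateral deviation S' = (S'_i, S_{-i}) of agent i, H(S') − H(S) = w_i · (U_i(S') − U_i(S)). -/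
open Finset

variable {N A : Type*} [Fintype N] [Fintype A] [DecidableEq N]

/-- The weighted potential `H(S) = ∑_j h_j(S)` for a two-agent game. -/
noncomputable def Hpot (G : CAG N (Fin 2)) (S : Fin 2 → Finset N) : ℝ :=
  ∑ j : N,
    if j ∈ S 0 ∧ j ∈ S 1 then
      (G.v j : ℝ) * ((G.w 0 : ℝ) + (G.w 1 : ℝ) -
        (G.w 0 : ℝ) * (G.w 1 : ℝ) / ((G.w 0 : ℝ) + (G.w 1 : ℝ)))
    else if j ∈ S 0 then (G.v j : ℝ) * (G.w 0 : ℝ)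
    else if j ∈ S 1 then (G.v j : ℝ) * (G.w 1 : ℝ)
    else 0

/-- In any two-agent customer attraction game, `H` is a weighted
potential: every unilateral deviation of agent `i` changes `H` by `w_i` times the
change in agent `i`'s utility. -/
theorem two_agent_weighted_potential
    (G : CAG N (Fin 2)) (S : Fin 2 → Finset N) (hS : G.valid S)
    (i : Fin 2) (S' : Finset N) (hS' : S' ∈ G.strat i) :
    Hpot G (Function.update S i S') - Hpot G S
      = (G.w i : ℝ) * (G.util (Function.update S i S') i - G.util S i) := by
  have hw0 : (0:ℝ) < (G.w 0 : ℝ) := by exact_mod_cast G.w_pos 0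
  have hw1 : (0:ℝ) < (G.w 1 : ℝ) := by exact_mod_cast G.w_pos 1
  have hsum : (G.w 0 : ℝ) + (G.w 1 : ℝ) ≠ 0 := by positivity
  have util_eq : ∀ (T : Fin 2 → Finset N) (k : Fin 2),
      G.util T k = ∑ j : N, if j ∈ T k then (G.v j : ℝ) * (G.w k : ℝ) / (G.load T j : ℝ) else 0 := by
    intro T k
    rw [CAG.util, Finset.sum_ite_mem, Finset.univ_inter]
  have load_eq : ∀ (T : Fin 2 → Finset N) (j : N), (G.load T j : ℝ) =
      (if j ∈ T 0 then (G.w 0 : ℝ) else 0) + (if j ∈ T 1 then (G.w 1 : ℝ) else 0) := by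
    intro T j
    simp only [CAG.load, Fin.sum_univ_two]
    push_cast
    rfl
  fin_cases i <;> simp only [Fin.isValue, Fin.mk_zero, Fin.mk_one]
  · have hT0 : Function.update S 0 S' 0 = S' := by simp
    have hT1 : Function.update S 0 S' 1 = S 1 := by
      simp [Function.update, show (1 : Fin 2) ≠ 0 from by decide]
    rw [Hpot, Hpot, util_eq, util_eq, ← Finset.sum_sub_distrib,
      ← Finset.sum_sub_distrib, Finset.mul_sum]
    refine Finset.sum_congr rfl fun j _ => ?_
    rw [load_eq, load_eq, hT0, hT1]
    by_cases h1 : j ∈ S' <;> by_cases h2 : j ∈ S 0 <;> by_cases h3 : j ∈ S 1 <;>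
      simp only [h1, h2, h3, if_true, if_false, and_true, and_false, true_and, false_and,
        and_self, add_zero, zero_add] <;> field_simp <;> ring
  · have hT0 : Function.update S 1 S' 0 = S 0 := by
      simp [Function.update, show (0 : Fin 2) ≠ 1 from by decide]
    have hT1 : Function.update S 1 S' 1 = S' := by simp
    rw [Hpot, Hpot, util_eq, util_eq, ← Finset.sum_sub_distrib,
      ← Finset.sum_sub_distrib, Finset.mul_sum]
    refine Finset.sum_congr rfl fun j _ => ?_
    rw [load_eq, load_eq, hT0, hT1]
    by_cases h1 : j ∈ S' <;> by_cases h2 : j ∈ S 0 <;> by_cases h3 : j ∈ S 1 <;>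
      simp only [h1, h2, h3, if_true, if_false, and_true, and_false, true_and, false_and,
        and_self, add_zero, zero_add] <;> field_simp <;> ring
end

section
/- Every customer attraction game with exactly two agents (with arbitrary integer weights w_1, w_2 ≥ 1, arbitrary strategy spaces, and arbitrary node values) possesses a pure Nash equilibrium. -/
open Finset

variable {N A : Type*} [Fintype N] [Fintype A] [DecidableEq N]

lemma key_pot (G : CAG N (Fin 2)) (S : Fin 2 → Finset N) :
    (G.w 0 : ℝ) * G.util S 0 + (G.w 1 : ℝ) * ∑ j ∈ S 1, (G.v j : ℝ)
      = (G.w 1 : ℝ) * G.util S 1 + (G.w 0 : ℝ) * ∑ j ∈ S 0, (G.v j : ℝ) := by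
  have h0 : (0:ℝ) < G.w 0 := by exact_mod_cast G.w_pos 0
  have h1 : (0:ℝ) < G.w 1 := by exact_mod_cast G.w_pos 1
  unfold CAG.util CAG.load
  have conv : ∀ (i : Fin 2) (f : N → ℝ), ∑ j ∈ S i, f j
      = ∑ j : N, if j ∈ S i then f j else 0 := by
    intro i f
    rw [Finset.sum_ite_mem, Finset.univ_inter]
  simp only [conv]
  rw [Finset.mul_sum, Finset.mul_sum, Finset.mul_sum, Finset.mul_sum,
    ← Finset.sum_add_distrib, ← Finset.sum_add_distrib]
  refine Finset.sum_congr rfl fun j _ => ?_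
  simp only [Fin.sum_univ_two]
  by_cases hA : j ∈ S 0 <;> by_cases hB : j ∈ S 1 <;> (simp [hA, hB, h0.ne', h1.ne', mul_div_assoc, div_self]; try (field_simp; ring))

lemma key_pot' (G : CAG N (Fin 2)) (T0 T1 : Finset N) :
    (G.w 0 : ℝ) * G.util ![T0, T1] 0 + (G.w 1 : ℝ) * ∑ j ∈ T1, (G.v j : ℝ)
      = (G.w 1 : ℝ) * G.util ![T0, T1] 1 + (G.w 0 : ℝ) * ∑ j ∈ T0, (G.v j : ℝ) := by
  have := key_pot G ![T0, T1]
  simpa using this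

/-- Every customer attraction game with exactly two agents (arbitrary
weights, values and strategy spaces) possesses a pure Nash equilibrium. -/
theorem exists_PNE_two_agents [Nonempty N] (G : CAG N (Fin 2)) :
    ∃ S : Fin 2 → Finset N, G.PNE S := by
  have h0 : (0:ℝ) < G.w 0 := by exact_mod_cast G.w_pos 0
  have h1 : (0:ℝ) < G.w 1 := by exact_mod_cast G.w_pos 1
  obtain ⟨p, hp, hmax⟩ := Finset.exists_max_image ((G.strat 0) ×ˢ (G.strat 1))
    (fun p => (G.w 0 : ℝ) * G.util ![p.1, p.2] 0 + (G.w 1 : ℝ) * ∑ j ∈ p.2, (G.v j : ℝ))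
    ((G.strat_ne 0).product (G.strat_ne 1))
  obtain ⟨hp0, hp1⟩ := Finset.mem_product.mp hp
  refine ⟨![p.1, p.2], fun i => ?_, fun i S' hS' => ?_⟩
  · fin_cases i <;> simpa
  · fin_cases i
    · have hupd : Function.update ![p.1, p.2] 0 S' = ![S', p.2] := by
        funext i; fin_cases i <;> simp
      have := hmax (S', p.2) (Finset.mem_product.mpr ⟨hS', hp1⟩)
      simp only at this
      have h := (add_le_add_iff_right ((G.w 1 : ℝ) * ∑ j ∈ p.2, (G.v j : ℝ))).mp this
      show G.util (Function.update ![p.1, p.2] 0 S') 0 ≤ G.util ![p.1, p.2] 0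
      rw [hupd]
      exact le_of_mul_le_mul_left h h0
    · have hupd : Function.update ![p.1, p.2] 1 S' = ![p.1, S'] := by
        funext i; fin_cases i <;> simp
      have := hmax (p.1, S') (Finset.mem_product.mpr ⟨hp0, hS'⟩)
      simp only at this
      rw [key_pot' G p.1 S', key_pot' G p.1 p.2] at this
      have h := (add_le_add_iff_right ((G.w 0 : ℝ) * ∑ j ∈ p.1, (G.v j : ℝ))).mp this
      show G.util (Function.update ![p.1, p.2] 1 S') 1 ≤ G.util ![p.1, p.2] 1
      rw [hupd]
      exact le_of_mul_le_mul_left h h1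
end

section
/- Consider the customer attraction game with node set N = {q_1,q_2,q_3,q_4} with values v_{q_1}=2, v_{q_2}=1, v_{q_3}=1, v_{q_4}=2, and three agents with weights w_1=4, w_2=1, w_3=1, where agent 1 has strategy space {{q_1,q_2}, {q_3,q_4}}, agent 2 has strategy space {{q_1,q_3}, {q_2,q_4}}, and agent 3 has the single strategy {q_1,q_4}. This game has no pure Nash equilibrium. -/
open Finset

variable {N A : Type*} [Fintype N] [Fintype A] [DecidableEq N]

/-- The instance of Example 1: nodes `q_1,…,q_4` with values `2,1,1,2`, agents with
weights `4,1,1`, strategy spaces `{{q_1,q_2},{q_3,q_4}}`, `{{q_1,q_3},{q_2,q_4}}`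
and `{{q_1,q_4}}`. -/
def G9 : CAG (Fin 4) (Fin 3) where
  v := ![2, 1, 1, 2]
  v_pos := by decide
  w := ![4, 1, 1]
  w_pos := by decide
  strat := ![{({0, 1} : Finset (Fin 4)), ({2, 3} : Finset (Fin 4))},
             {({0, 2} : Finset (Fin 4)), ({1, 3} : Finset (Fin 4))},
             {({0, 3} : Finset (Fin 4))}]
  strat_ne := by decide

/-!
Agent 3 is fixed on `{q₁, q₄}`, so the game is a 2×2 game between agents 1 and 2, and it is
matching pennies. When all three agents meet on a value-2 node (profiles `({q₁,q₂},{q₁,q₃})`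
and `({q₃,q₄},{q₂,q₄})`), agent 1 earns `7/3` and prefers to switch to its other strategy,
earning `12/5`; in the two remaining profiles agent 2 earns `6/5` and prefers to switch,
earning `4/3`. The best responses therefore cycle through all four profiles.
In the code, node `qₖ` is `k - 1 : Fin 4` and agent `k` is `k - 1 : Fin 3`.
-/

theorem CAG.not_PNE_of_util_lt_update [DecidableEq A] {G : CAG N A} {S : A → Finset N} {i : A}
    {S' : Finset N} (hS' : S' ∈ G.strat i) (hlt : G.util S i < G.util (Function.update S i S') i) :
    ¬ G.PNE S :=
  fun h => (h.2 i S' hS').not_gt hlt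

namespace G9

def profile (a b : Finset (Fin 4)) : Fin 3 → Finset (Fin 4) :=
  ![a, b, {0, 3}]

theorem exists_profile_of_valid {S : Fin 3 → Finset (Fin 4)} (hS : G9.valid S) :
    ∃ a b, (a = {0, 1} ∨ a = {2, 3}) ∧ (b = {0, 2} ∨ b = {1, 3}) ∧ S = profile a b := by
  refine ⟨S 0, S 1, by simpa [G9] using hS 0, by simpa [G9] using hS 1, ?_⟩
  ext1 i
  fin_cases i
  · rfl
  · rfl
  · simpa [G9, profile] using hS 2

theorem update_profile_zero (a b a' : Finset (Fin 4)) :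
    Function.update (profile a b) 0 a' = profile a' b := by
  ext1 i; fin_cases i <;> rfl

theorem update_profile_one (a b b' : Finset (Fin 4)) :
    Function.update (profile a b) 1 b' = profile a b' := by
  ext1 i; fin_cases i <;> rfl

theorem load_profile_01_02 : G9.load (profile {0, 1} {0, 2}) = ![6, 4, 1, 1] := by decide

theorem load_profile_23_02 : G9.load (profile {2, 3} {0, 2}) = ![2, 0, 5, 5] := by decide

theorem load_profile_23_13 : G9.load (profile {2, 3} {1, 3}) = ![1, 1, 4, 6] := by decide

theorem load_profile_01_13 : G9.load (profile {0, 1} {1, 3}) = ![5, 5, 0, 2] := by decide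

theorem not_PNE_profile_01_02 : ¬ G9.PNE (profile {0, 1} {0, 2}) := by
  refine CAG.not_PNE_of_util_lt_update (i := 0) (S' := {2, 3}) (by decide) ?_
  simp only [update_profile_zero, CAG.util, load_profile_01_02, load_profile_23_02]
  simp only [profile, G9, Matrix.cons_val, Matrix.cons_val_zero, Matrix.cons_val_one, mem_singleton,
    Fin.reduceEq, not_false_eq_true, sum_insert, sum_singleton]
  norm_num

theorem not_PNE_profile_23_02 : ¬ G9.PNE (profile {2, 3} {0, 2}) := by
  refine CAG.not_PNE_of_util_lt_update (i := 1) (S' := {1, 3}) (by decide) ?_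
  simp only [update_profile_one, CAG.util, load_profile_23_02, load_profile_23_13]
  simp only [profile, G9, Matrix.cons_val, Matrix.cons_val_zero, Matrix.cons_val_one, mem_singleton,
    Fin.reduceEq, not_false_eq_true, sum_insert, sum_singleton]
  norm_num

theorem not_PNE_profile_23_13 : ¬ G9.PNE (profile {2, 3} {1, 3}) := by
  refine CAG.not_PNE_of_util_lt_update (i := 0) (S' := {0, 1}) (by decide) ?_
  simp only [update_profile_zero, CAG.util, load_profile_23_13, load_profile_01_13]
  simp only [profile, G9, Matrix.cons_val, Matrix.cons_val_zero, Matrix.cons_val_one, mem_singleton,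
    Fin.reduceEq, not_false_eq_true, sum_insert, sum_singleton]
  norm_num

theorem not_PNE_profile_01_13 : ¬ G9.PNE (profile {0, 1} {1, 3}) := by
  refine CAG.not_PNE_of_util_lt_update (i := 1) (S' := {0, 2}) (by decide) ?_
  simp only [update_profile_one, CAG.util, load_profile_01_13, load_profile_01_02]
  simp only [profile, G9, Matrix.cons_val, Matrix.cons_val_zero, Matrix.cons_val_one, mem_singleton,
    Fin.reduceEq, not_false_eq_true, sum_insert, sum_singleton]
  norm_num

end G9

/-- The game `G9` has no pure Nash equilibrium. -/
theorem no_PNE_example : ¬ ∃ S : Fin 3 → Finset (Fin 4), G9.PNE S := by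
  rintro ⟨S, hS⟩
  obtain ⟨a, b, rfl | rfl, rfl | rfl, rfl⟩ := G9.exists_profile_of_valid hS.1
  exacts [G9.not_PNE_profile_01_02 hS, G9.not_PNE_profile_01_13 hS,
    G9.not_PNE_profile_23_02 hS, G9.not_PNE_profile_23_13 hS]
end

section
/- There exists a customer attraction game with exactly three agents whose weights are (w, 1, 1) for some integer w ≥ 2, in which all nodes have value 1 and all three agents share one common strategy space (𝒮_1 = 𝒮_2 = 𝒮_3), that has no pure Nash equilibrium. -/
open Finset

variable {N A : Type*} [Fintype N] [Fintype A] [DecidableEq N]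

/-!
Multiplying all utilities by `L = (∑ i, w i)!`, which every nonzero load divides, turns them
into natural numbers over the common denominator `L`, so that "some agent has a profitable
deviation" becomes a decidable statement about natural numbers. The witness, found by computer
search, has weights `(5, 1, 1)` and five common strategies on 17 unit-value nodes; the kernel
checks that each of its 125 strategy profiles admits a profitable deviation.
-/

open scoped Nat

namespace CAG

section

variable (G : CAG N A) (S : A → Finset N)

theorem load_pos_of_mem {i : A} {j : N} (h : j ∈ S i) : 0 < G.load S j :=
  calc 0 < G.w i := G.w_pos i
    _ = if j ∈ S i then G.w i else 0 := (if_pos h).symm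
    _ ≤ G.load S j := single_le_sum (f := fun k => if j ∈ S k then G.w k else 0)
        (fun _ _ => Nat.zero_le _) (mem_univ i)

theorem load_le_sum_w (j : N) : G.load S j ≤ ∑ i, G.w i :=
  sum_le_sum fun i _ => by split_ifs <;> omega

theorem load_dvd_factorial {i : A} {j : N} (h : j ∈ S i) : G.load S j ∣ (∑ k, G.w k)! :=
  Nat.dvd_factorial (G.load_pos_of_mem S h) (G.load_le_sum_w S j)

def scaledUtil (L : ℕ) (i : A) : ℕ :=
  ∑ j ∈ S i, G.v j * G.w i * (L / G.load S j)

theorem util_eq_scaledUtil_div {L : ℕ} (hL : 0 < L) {i : A}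
    (hdvd : ∀ j ∈ S i, G.load S j ∣ L) : G.util S i = G.scaledUtil S L i / L := by
  rw [scaledUtil, Nat.cast_sum, sum_div]
  refine sum_congr rfl fun j hj => ?_
  have hload : (G.load S j : ℝ) ≠ 0 := by
    exact_mod_cast (Nat.pos_of_dvd_of_pos (hdvd j hj) hL).ne'
  rw [Nat.cast_mul, Nat.cast_div (hdvd j hj) hload]
  push_cast
  field_simp

end

theorem not_PNE_of_scaledUtil_lt [DecidableEq A] (G : CAG N A) {S : A → Finset N} {i : A}
    {T : Finset N} (hT : T ∈ G.strat i)
    (h : G.scaledUtil S (∑ k, G.w k)! i < G.scaledUtil (Function.update S i T) (∑ k, G.w k)! i) :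
    ¬ G.PNE S := by
  rintro ⟨-, hbest⟩
  have hL : 0 < ((∑ k, G.w k)! : ℝ) := by exact_mod_cast Nat.factorial_pos _
  have := hbest i T hT
  rw [util_eq_scaledUtil_div _ _ (Nat.factorial_pos _) fun _ => G.load_dvd_factorial _,
    util_eq_scaledUtil_div _ _ (Nat.factorial_pos _) fun _ => G.load_dvd_factorial _,
    div_le_div_iff_of_pos_right hL, Nat.cast_le] at this
  exact this.not_gt h

/-- The common strategy space is the range of `σ`, so that profiles can be enumerated as `A → ι`. -/
def unitSymmetric {ι : Type*} [Fintype ι] [Nonempty ι] (w : A → ℕ) (hw : ∀ i, 1 ≤ w i)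
    (σ : ι → Finset N) : CAG N A where
  v _ := 1
  v_pos _ := le_rfl
  w := w
  w_pos := hw
  strat _ := univ.image σ
  strat_ne _ := univ_nonempty.image σ

theorem unitSymmetric_not_exists_PNE [DecidableEq A] {ι : Type*} [Fintype ι] [Nonempty ι]
    [DecidableEq ι] {w : A → ℕ} {hw : ∀ i, 1 ≤ w i} {σ : ι → Finset N}
    (h : ∀ s : A → ι, ∃ i, ∃ t, (unitSymmetric w hw σ).scaledUtil (σ ∘ s) (∑ k, w k)! i <
      (unitSymmetric w hw σ).scaledUtil (σ ∘ Function.update s i t) (∑ k, w k)! i) :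
    ¬ ∃ S, (unitSymmetric w hw σ).PNE S := by
  rintro ⟨S, hS⟩
  choose s hs using fun i => mem_image.1 (hS.1 i)
  obtain ⟨i, t, hlt⟩ := h s
  have hS_eq : σ ∘ s = S := funext fun i => (hs i).2
  rw [Function.comp_update, hS_eq] at hlt
  exact not_PNE_of_scaledUtil_lt _ (mem_image_of_mem σ (mem_univ t)) hlt hS

end CAG

def weightedSymmetricStrategy : Fin 5 → Finset (Fin 17) :=
  ![{0, 1, 2, 3, 4, 5, 6, 7}, {2, 3, 4, 8, 9, 10, 11}, {2, 3, 4, 12, 13, 14, 15, 16},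
    {5, 6, 7, 8, 9, 12, 13}, {5, 6, 7, 10, 11, 14, 15, 16}]

def weightedSymmetricGame : CAG (Fin 17) (Fin 3) :=
  CAG.unitSymmetric ![5, 1, 1] (by decide) weightedSymmetricStrategy

theorem weightedSymmetricGame_not_exists_PNE : ¬ ∃ S, weightedSymmetricGame.PNE S :=
  CAG.unitSymmetric_not_exists_PNE (by decide +kernel)

/-- There exists a customer attraction game with exactly three agents
of weights `(w,1,1)` for some integer `w ≥ 2`, in which all nodes have value 1 and
all three agents share one common strategy space, that has no pure Nash
equilibrium. -/
theorem exists_weighted_symmetric_game_without_PNE :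
    ∃ (n w : ℕ), 2 ≤ w ∧
      ∃ G : CAG (Fin n) (Fin 3),
        G.w = ![w, 1, 1] ∧
        (∀ j, G.v j = 1) ∧
        (∀ i i' : Fin 3, G.strat i = G.strat i') ∧
        ¬ ∃ S : Fin 3 → Finset (Fin n), G.PNE S :=
  ⟨17, 5, by norm_num, weightedSymmetricGame, rfl, fun _ => rfl, fun _ _ => rfl,
    weightedSymmetricGame_not_exists_PNE⟩
end

section
/- Define ψ : ℝ → ℝ by ψ(t) = ln(max(e^{-1}, t)). Then for every integer x ≥ 1 and every integer y ≥ 0, it holds that x/(x+y) ≤ ψ(y+x) − ψ(y) ≤ (ln(1+x) + 1) · x/(x+y). -/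
/-- `ψ(t) = ln(max(e⁻¹, t))`. -/
noncomputable def psi (t : ℝ) : ℝ := Real.log (max (Real.exp (-1)) t)

/-!
For `y ≥ 1` both arguments of `ψ` are at least `1`, so the increment is `ln(1 + x/y)`, and the
bounds come from `1 - 1/u ≤ ln u ≤ u - 1` together with `ln(1 + x/y) ≤ ln(1 + x)`. For `y = 0` the
increment is `ln x + 1`, since `ψ(0) = -1`.
-/

open Real

lemma psi_of_one_le {t : ℝ} (ht : 1 ≤ t) : psi t = log t := by
  have : exp (-1) ≤ 1 := exp_le_one_iff.mpr (by norm_num)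
  rw [psi, max_eq_right (this.trans ht)]

lemma psi_zero : psi 0 = -1 := by
  rw [psi, max_eq_left (exp_pos _).le, log_exp]

section LogIncrement

variable {x y : ℝ}

lemma div_add_le_log_add_sub_log (hx : 0 ≤ x) (hy : 0 < y) :
    x / (x + y) ≤ log (y + x) - log y := by
  have hxy : 0 < y + x := by linarith
  rw [← log_div hxy.ne' hy.ne']
  calc x / (x + y) = 1 - ((y + x) / y)⁻¹ := by field_simp; ring
    _ ≤ log ((y + x) / y) := one_sub_inv_le_log_of_pos (by positivity)

lemma log_add_sub_log_le (hx : 0 ≤ x) (hy : 1 ≤ y) :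
    log (y + x) - log y ≤ (log (1 + x) + 1) * (x / (x + y)) := by
  have hy0 : 0 < y := by linarith
  have hq : 0 < (y + x) / y := by positivity
  rw [← log_div (by linarith) hy0.ne']
  have hL_le_div : log ((y + x) / y) ≤ x / y :=
    (log_le_sub_one_of_pos hq).trans_eq (by field_simp; ring)
  have hL_le_log : log ((y + x) / y) ≤ log (1 + x) := by
    refine log_le_log hq ?_
    rw [div_le_iff₀ hy0]
    nlinarith
  have key : (x + y) * log ((y + x) / y) ≤ (log (1 + x) + 1) * x :=
    calc (x + y) * log ((y + x) / y) = x * log ((y + x) / y) + y * log ((y + x) / y) := by ring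
      _ ≤ x * log (1 + x) + y * (x / y) := by gcongr
      _ = (log (1 + x) + 1) * x := by field_simp
  rw [mul_div_assoc', le_div_iff₀ (by linarith)]
  linarith

end LogIncrement

/-- For every integer `x ≥ 1` and every integer `y ≥ 0`,
`x/(x+y) ≤ ψ(y+x) − ψ(y) ≤ (ln(1+x) + 1) · x/(x+y)`. -/
theorem psi_increment_bounds (x y : ℕ) (hx : 1 ≤ x) :
    (x : ℝ) / ((x : ℝ) + (y : ℝ)) ≤ psi ((y : ℝ) + (x : ℝ)) - psi (y : ℝ) ∧
    psi ((y : ℝ) + (x : ℝ)) - psi (y : ℝ)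
      ≤ (Real.log (1 + (x : ℝ)) + 1) * ((x : ℝ) / ((x : ℝ) + (y : ℝ))) := by
  have hx1 : (1 : ℝ) ≤ x := by exact_mod_cast hx
  rcases Nat.eq_zero_or_pos y with rfl | hy
  · have hlog_le : log x ≤ log (1 + x) := log_le_log (by linarith) (by linarith)
    rw [Nat.cast_zero, zero_add, add_zero, div_self (by linarith), psi_of_one_le hx1, psi_zero]
    constructor <;> linarith [log_nonneg hx1]
  · have hy1 : (1 : ℝ) ≤ y := by exact_mod_cast hy
    rw [psi_of_one_le (by linarith), psi_of_one_le hy1]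
    exact ⟨div_add_le_log_add_sub_log (by linarith) (by linarith),
      log_add_sub_log_le (by linarith) hy1⟩
end

section
/- Consider a customer attraction game with exactly two agents, both of weight 1, in which every node has value 1. Suppose σ_2 : 𝒮_1 → 𝒮_2 is a best-response map for agent 2, i.e., U_2(S_1, σ_2(S_1)) ≥ U_2(S_1, S_2) for all S_1 ∈ 𝒮_1 and S_2 ∈ 𝒮_2, and suppose S_1^* ∈ 𝒮_1 satisfies U_1(S_1^*, σ_2(S_1^*)) ≥ U_1(S_1, σ_2(S_1)) for all S_1 ∈ 𝒮_1; set S_2^* = σ_2(S_1^*). (This is exactly a subgame-perfect equilibrium outcome of the sequential game where agent 1 moves first.) Then for every strategy profile (S_1, S_2) ∈ 𝒮_1 × 𝒮_2, SW(S_1, S_2) ≤ (3/2) · SW(S_1^*, S_2^*). -/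
open Finset

variable {N A : Type*} [Fintype N] [Fintype A] [DecidableEq N]

/-! With unit weights, a node attracted by both agents is split evenly, so the second mover's
payoff is `v(S₂) - v(S₁ ∩ S₂)/2` and the welfare is `v(S₁ ∪ S₂)`. For any profile `(S₁, S₂)`, let
`T = σ₂ S₁` and `S₂* = σ₂ S₁*`. Then
`SW(S₁, S₂) ≤ v(S₁) + U₂(S₁, T) = U₁(S₁, T) + v(T) ≤ U₁(S₁*, S₂*) + v(T)`, and `T` is a deviation
for the second mover against `S₁*`, so `v(T) ≤ U₂(S₁*, T) + v(S₁*)/2 ≤ U₂(S₁*, S₂*) + v(S₁*)/2`.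
Hence `SW(S₁, S₂) ≤ SW(S₁*, S₂*) + v(S₁*)/2 ≤ (3/2) SW(S₁*, S₂*)`. -/

namespace CAG

noncomputable def value (G : CAG N A) (X : Finset N) : ℝ :=
  ∑ j ∈ X, (G.v j : ℝ)

lemma value_inter_le_left (G : CAG N A) (X Y : Finset N) : G.value (X ∩ Y) ≤ G.value X :=
  Finset.sum_le_sum_of_subset_of_nonneg Finset.inter_subset_left fun j _ _ =>
    Nat.cast_nonneg (G.v j)

lemma value_le_value_union_left (G : CAG N A) (X Y : Finset N) : G.value X ≤ G.value (X ∪ Y) :=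
  Finset.sum_le_sum_of_subset_of_nonneg Finset.subset_union_left fun j _ _ =>
    Nat.cast_nonneg (G.v j)

lemma value_union_add_value_inter (G : CAG N A) (X Y : Finset N) :
    G.value (X ∪ Y) + G.value (X ∩ Y) = G.value X + G.value Y :=
  Finset.sum_union_inter

section TwoUnitWeightAgents

variable (G : CAG N (Fin 2)) (X Y : Finset N)

lemma load_pair (hw : ∀ i, G.w i = 1) (j : N) :
    G.load ![X, Y] j = (if j ∈ X then 1 else 0) + (if j ∈ Y then 1 else 0) := by
  rw [CAG.load, Fin.sum_univ_two]
  simp [hw]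

lemma util_pair_zero (hw : ∀ i, G.w i = 1) :
    G.util ![X, Y] 0 = G.value X - G.value (X ∩ Y) / 2 := by
  have share : ∀ j ∈ X, (G.v j : ℝ) * G.w 0 / G.load ![X, Y] j
      = G.v j - if j ∈ Y then (G.v j : ℝ) / 2 else 0 := by
    intro j hj
    by_cases hjY : j ∈ Y
    · simp [load_pair G X Y hw, hw, hj, hjY]
      ring
    · simp [load_pair G X Y hw, hw, hj, hjY]
  rw [CAG.util, Matrix.cons_val_zero, Finset.sum_congr rfl share, Finset.sum_sub_distrib,
    Finset.sum_ite_mem, ← Finset.sum_div]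
  rfl

lemma util_pair_one_eq_util_pair_zero_swap (hw : ∀ i, G.w i = 1) :
    G.util ![X, Y] 1 = G.util ![Y, X] 0 := by
  simp only [CAG.util, Matrix.cons_val_one, Matrix.cons_val_zero, hw, load_pair G _ _ hw,
    add_comm]

lemma util_pair_one (hw : ∀ i, G.w i = 1) :
    G.util ![X, Y] 1 = G.value Y - G.value (X ∩ Y) / 2 := by
  rw [util_pair_one_eq_util_pair_zero_swap G X Y hw, util_pair_zero G Y X hw, Finset.inter_comm]

lemma sw_pair (hw : ∀ i, G.w i = 1) : G.sw ![X, Y] = G.value (X ∪ Y) := by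
  rw [CAG.sw, Fin.sum_univ_two, util_pair_zero G X Y hw, util_pair_one G X Y hw]
  linarith [G.value_union_add_value_inter X Y]

lemma sw_pair_le_value_add_util_pair_one (hw : ∀ i, G.w i = 1) :
    G.sw ![X, Y] ≤ G.value X + G.util ![X, Y] 1 := by
  rw [sw_pair G X Y hw, util_pair_one G X Y hw]
  have hXY : 0 ≤ G.value (X ∩ Y) := Finset.sum_nonneg fun j _ => Nat.cast_nonneg (G.v j)
  linarith [G.value_union_add_value_inter X Y]

lemma value_add_util_pair_one (hw : ∀ i, G.w i = 1) :
    G.value X + G.util ![X, Y] 1 = G.util ![X, Y] 0 + G.value Y := by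
  rw [util_pair_zero G X Y hw, util_pair_one G X Y hw]
  ring

lemma value_le_util_pair_one_add (hw : ∀ i, G.w i = 1) :
    G.value Y ≤ G.util ![X, Y] 1 + G.value X / 2 := by
  rw [util_pair_one G X Y hw]
  linarith [G.value_inter_le_left X Y]

lemma value_le_sw_pair (hw : ∀ i, G.w i = 1) : G.value X ≤ G.sw ![X, Y] := by
  rw [sw_pair G X Y hw]
  exact G.value_le_value_union_left X Y

end TwoUnitWeightAgents

end CAG

theorem sequential_PoA_two_agents_general
    (G : CAG N (Fin 2)) (hw : ∀ i, G.w i = 1)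
    (σ2 : Finset N → Finset N)
    (hσmem : ∀ S1 ∈ G.strat 0, σ2 S1 ∈ G.strat 1)
    (hbr : ∀ S1 ∈ G.strat 0, ∀ S2 ∈ G.strat 1,
      G.util ![S1, S2] 1 ≤ G.util ![S1, σ2 S1] 1)
    (S1s : Finset N) (hS1s : S1s ∈ G.strat 0)
    (hopt : ∀ S1 ∈ G.strat 0, G.util ![S1, σ2 S1] 0 ≤ G.util ![S1s, σ2 S1s] 0) :
    ∀ S1 ∈ G.strat 0, ∀ S2 ∈ G.strat 1,
      G.sw ![S1, S2] ≤ (3 / 2 : ℝ) * G.sw ![S1s, σ2 S1s] := by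
  intro S1 hS1 S2 hS2
  calc G.sw ![S1, S2]
      ≤ G.value S1 + G.util ![S1, S2] 1 := G.sw_pair_le_value_add_util_pair_one S1 S2 hw
    _ ≤ G.value S1 + G.util ![S1, σ2 S1] 1 := by gcongr; exact hbr S1 hS1 S2 hS2
    _ = G.util ![S1, σ2 S1] 0 + G.value (σ2 S1) := G.value_add_util_pair_one S1 _ hw
    _ ≤ G.util ![S1s, σ2 S1s] 0 + (G.util ![S1s, σ2 S1] 1 + G.value S1s / 2) :=
        add_le_add (hopt S1 hS1) (G.value_le_util_pair_one_add S1s _ hw)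
    _ ≤ G.util ![S1s, σ2 S1s] 0 + (G.util ![S1s, σ2 S1s] 1 + G.value S1s / 2) := by
        gcongr; exact hbr S1s hS1s _ (hσmem S1 hS1)
    _ = G.sw ![S1s, σ2 S1s] + G.value S1s / 2 := by
        rw [CAG.sw, Fin.sum_univ_two]; ring
    _ ≤ (3 / 2 : ℝ) * G.sw ![S1s, σ2 S1s] := by
        linarith [G.value_le_sw_pair S1s (σ2 S1s) hw]

/-- sequential PoA `3/2` for two symmetric agents.  If `σ₂` is a
best-response map for the second mover and `S₁*` is a first-mover strategy that is
optimal against `σ₂` (i.e. `(S₁*, σ₂ S₁*)` is a subgame-perfect-equilibrium outcome),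
then every strategy profile has social welfare at most `3/2` times that of the
outcome `(S₁*, σ₂ S₁*)`. -/
theorem sequential_PoA_two_agents
    (G : CAG N (Fin 2)) (hw : ∀ i, G.w i = 1) (hv : ∀ j, G.v j = 1)
    (σ2 : Finset N → Finset N)
    (hσmem : ∀ S1 ∈ G.strat 0, σ2 S1 ∈ G.strat 1)
    (hbr : ∀ S1 ∈ G.strat 0, ∀ S2 ∈ G.strat 1,
      G.util ![S1, S2] 1 ≤ G.util ![S1, σ2 S1] 1)
    (S1s : Finset N) (hS1s : S1s ∈ G.strat 0)
    (hopt : ∀ S1 ∈ G.strat 0, G.util ![S1, σ2 S1] 0 ≤ G.util ![S1s, σ2 S1s] 0) :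
    ∀ S1 ∈ G.strat 0, ∀ S2 ∈ G.strat 1,
      G.sw ![S1, S2] ≤ (3 / 2 : ℝ) * G.sw ![S1s, σ2 S1s] :=
  sequential_PoA_two_agents_general G hw σ2 hσmem hbr S1s hS1s hopt
end

section
/- Let n ≥ 1 be an integer, let p_1 < p_2 < … < p_n be the first n prime numbers, and let M = ∏_{i=1}^n p_i. Then for every integer w with 0 ≤ w ≤ 2^n, there exist integers C_1, …, C_n and an integer C'' such that |C_i| < p_i for every i ∈ {1,…,n}, |C''| ≤ n+1, and (as rational numbers) w/M = C'' + ∑_{i=1}^n C_i / p_i. -/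
open Finset

/-- Let `p_1 < … < p_n` be the first `n` primes and `M = ∏ p_i`.
For every integer `0 ≤ w ≤ 2^n` there are integers `C_1, …, C_n` and `C''` with
`|C_i| < p_i`, `|C''| ≤ n+1`, and `w/M = C'' + ∑_i C_i/p_i` as rational numbers. -/
theorem fraction_decomposition (n : ℕ) (hn : 1 ≤ n)
    (M : ℕ) (hM : M = ∏ i ∈ Finset.range n, Nat.nth Nat.Prime i)
    (w : ℕ) (hw : w ≤ 2 ^ n) :
    ∃ (C : Fin n → ℤ) (C'' : ℤ),
      (∀ i : Fin n, |C i| < (Nat.nth Nat.Prime i : ℤ)) ∧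
      |C''| ≤ (n : ℤ) + 1 ∧
      (w : ℚ) / (M : ℚ)
        = (C'' : ℚ) + ∑ i : Fin n, (C i : ℚ) / (Nat.nth Nat.Prime (i : ℕ) : ℚ) := by
  set P : ℕ → ℕ := Nat.nth Nat.Prime with hP
  have hPp : ∀ i, (P i).Prime := Nat.prime_nth_prime
  have hPinj : Function.Injective P :=
    (Nat.nth_strictMono Nat.infinite_setOf_prime).injective
  have hPpos : ∀ i, 0 < P i := fun i => (hPp i).pos
  -- N j = M / P j
  set N : Fin n → ℕ := fun j => ∏ i ∈ (Finset.range n).erase j, P i with hN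
  have hNP : ∀ j : Fin n, N j * P j = M := by
    intro j
    rw [hM, hN]
    exact Finset.prod_erase_mul _ _ (Finset.mem_range.mpr j.2)
  have hNnz : ∀ j : Fin n, ¬ (P j ∣ N j) := by
    intro j hdvd
    obtain ⟨i, hi, hpi⟩ := (Nat.Prime.prime (hPp j)).exists_mem_finset_dvd hdvd
    have : (j : ℕ) = i := hPinj ((Nat.prime_dvd_prime_iff_eq (hPp j) (hPp i)).mp hpi)
    exact (Finset.mem_erase.mp hi).1 this.symm
  have hPdvdN : ∀ j i : Fin n, i ≠ j → P j ∣ N i := by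
    intro j i hij
    refine Finset.dvd_prod_of_mem _ (Finset.mem_erase.mpr ⟨?_, Finset.mem_range.mpr j.2⟩)
    exact fun h => hij (Fin.ext h).symm
  -- definition of C
  set C : Fin n → ℤ := fun j =>
    letI : Fact (P j).Prime := ⟨hPp j⟩
    ((((w : ZMod (P j)) * ((N j : ZMod (P j)))⁻¹).val : ℕ) : ℤ) with hC
  have hCnonneg : ∀ j, 0 ≤ C j := fun j => Int.ofNat_nonneg _
  have hClt : ∀ j : Fin n, C j < (P j : ℤ) := by
    intro j
    haveI : Fact (P j).Prime := ⟨hPp j⟩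
    have := ZMod.val_lt ((w : ZMod (P j)) * ((N j : ZMod (P j)))⁻¹)
    simp only [hC]
    exact_mod_cast this
  -- each prime divides w - ∑ C i * N i
  have hdvd : ∀ j : Fin n, (P j : ℤ) ∣ ((w : ℤ) - ∑ i : Fin n, C i * (N i : ℤ)) := by
    intro j
    haveI : Fact (P j).Prime := ⟨hPp j⟩
    rw [← ZMod.intCast_zmod_eq_zero_iff_dvd]
    push_cast
    rw [Finset.sum_eq_single j]
    · have hNne : (N j : ZMod (P j)) ≠ 0 := by
        rw [Ne, ZMod.natCast_eq_zero_iff]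
        exact hNnz j
      rw [hC]
      push_cast
      rw [ZMod.natCast_val, ZMod.cast_id, mul_assoc, inv_mul_cancel₀ hNne, mul_one, sub_self]
    · intro i _ hij
      have : (N i : ZMod (P j)) = 0 :=
        (ZMod.natCast_eq_zero_iff _ _).mpr (hPdvdN j i hij)
      rw [this, mul_zero]
    · intro h; exact absurd (Finset.mem_univ j) h
  set x : ℤ := (w : ℤ) - ∑ i : Fin n, C i * (N i : ℤ) with hx
  have hMdvd : (M : ℤ) ∣ x := by
    have hdvd' : ∀ p ∈ (Finset.range n).image P, p ∣ x.natAbs := by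
      intro p hp
      obtain ⟨i, hi, rfl⟩ := Finset.mem_image.mp hp
      exact Int.natCast_dvd_natCast.mp
        (Int.dvd_natAbs.mpr (hdvd ⟨i, Finset.mem_range.mp hi⟩))
    have hprod : (∏ p ∈ (Finset.range n).image P, p) ∣ x.natAbs :=
      Finset.prod_primes_dvd _ (fun p hp => by
        obtain ⟨i, _, rfl⟩ := Finset.mem_image.mp hp
        exact (hPp i).prime) hdvd'
    have hMd : M ∣ x.natAbs := by
      rwa [Finset.prod_image (fun a _ b _ h => hPinj h), ← hM] at hprod
    exact Int.dvd_natAbs.mp (Int.natCast_dvd_natCast.mpr hMd)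
  set C'' : ℤ := x / M with hC''
  have hxC : C'' * (M : ℤ) = x := Int.ediv_mul_cancel hMdvd
  have hMpos : (0 : ℤ) < M := by
    rw [hM]
    exact_mod_cast Finset.prod_pos (fun i _ => hPpos i)
  have h2M : (2 ^ n : ℤ) ≤ M := by
    have : 2 ^ n ≤ M := by
      calc 2 ^ n = ∏ _i ∈ Finset.range n, 2 := by
            rw [Finset.prod_const, Finset.card_range]
        _ ≤ ∏ i ∈ Finset.range n, P i :=
            Finset.prod_le_prod' (fun i _ => (hPp i).two_le)
        _ = M := hM.symm
    exact_mod_cast this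
  have hNpos : ∀ i : Fin n, (0 : ℤ) < N i := by
    intro i
    exact_mod_cast Finset.prod_pos (fun k _ => hPpos k)
  have hterm : ∀ i : Fin n, C i * (N i : ℤ) ≤ M := by
    intro i
    calc C i * (N i : ℤ) ≤ ((P i : ℤ) - 1) * N i := by
          apply mul_le_mul_of_nonneg_right _ (hNpos i).le
          linarith [hClt i]
      _ = (P i : ℤ) * N i - N i := by ring
      _ ≤ (P i : ℤ) * N i := by linarith [hNpos i]
      _ = M := by exact_mod_cast congrArg (Nat.cast : ℕ → ℤ) ((mul_comm (N i) (P i)) ▸ hNP i)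
  have hsum_le : ∑ i : Fin n, C i * (N i : ℤ) ≤ n * M := by
    calc ∑ i : Fin n, C i * (N i : ℤ) ≤ ∑ _i : Fin n, (M : ℤ) :=
          Finset.sum_le_sum (fun i _ => hterm i)
      _ = n * M := by simp [Finset.sum_const, mul_comm]
  have hsum_nonneg : (0 : ℤ) ≤ ∑ i : Fin n, C i * (N i : ℤ) :=
    Finset.sum_nonneg (fun i _ => mul_nonneg (hCnonneg i) (hNpos i).le)
  have hwM : (w : ℤ) ≤ M := le_trans (by exact_mod_cast hw) h2M
  have hxabs : |x| ≤ (n : ℤ) * M := by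
    rw [abs_le]
    constructor
    · rw [hx]; nlinarith [Int.ofNat_nonneg w]
    · rw [hx]
      have hnM : (M : ℤ) ≤ n * M := by nlinarith [hn]
      linarith
  have hC''abs : |C''| ≤ (n : ℤ) := by
    have : |C''| * M ≤ (n : ℤ) * M := by
      rw [← abs_of_pos hMpos, ← abs_mul, hxC]
      rwa [abs_of_pos hMpos]
    exact le_of_mul_le_mul_right this hMpos
  refine ⟨C, C'', fun i => ?_, by linarith, ?_⟩
  · rw [abs_of_nonneg (hCnonneg i)]; exact hClt i
  have hMQ0 : (M : ℚ) ≠ 0 := by exact_mod_cast hMpos.ne'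
  have hPQ : ∀ i : Fin n, (P (i : ℕ) : ℚ) ≠ 0 := fun i =>
    Nat.cast_ne_zero.mpr (hPpos _).ne'
  have key : (w : ℚ) = (C'' : ℚ) * M + ∑ i : Fin n, (C i : ℚ) * (N i : ℚ) := by
    have h2 : (w : ℤ) = C'' * M + ∑ i : Fin n, C i * N i := by
      have := hxC
      rw [hx] at this
      linarith
    exact_mod_cast h2
  rw [div_eq_iff hMQ0, key, add_mul, Finset.sum_mul]
  congr 1
  refine Finset.sum_congr rfl fun i _ => ?_
  have hMNP : (M : ℚ) = (N i : ℚ) * (P (i : ℕ) : ℚ) := by exact_mod_cast (hNP i).symm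
  rw [hMNP, div_mul_eq_mul_div, mul_div_assoc, mul_div_cancel_right₀ _ (hPQ i)]
end
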